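/- arXiv:1810.01393 — 3 statements merged into one kernel-verified Lean document; each statement's English description precedes it below -/
import Mathlib

section
/- Let A : Fin p → Fin p → ℝ with all entries in [0,1], let x* ∈ ℝ^p be a probability vector (nonnegative entries summing to 1), and let r ≥ 1 be an integer. Suppose x⁽¹⁾, …, x⁽ʳ⁾ ∈ ℝ^p are probability vectors such that for all i ≠ j, x*ᵀ A x* − x⁽ⁱ⁾ᵀ A x⁽ʲ⁾ < ε/2, where ε > 0 satisfies r ≥ 2/ε. Then the vector x = (1/r) Σᵢ x⁽ⁱ⁾ satisfies x*ᵀ A x* − xᵀ A x < ε. -/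
theorem stmt_5 (p r : ℕ) (hr : 1 ≤ r) (A : Fin p → Fin p → ℝ)
    (hA : ∀ i j, A i j ∈ Set.Icc (0 : ℝ) 1)
    (xs : Fin p → ℝ) (hxs_nonneg : ∀ i, 0 ≤ xs i) (hxs_sum : ∑ i, xs i = 1)
    (x : Fin r → Fin p → ℝ)
    (hx_nonneg : ∀ i a, 0 ≤ x i a) (hx_sum : ∀ i, ∑ a, x i a = 1)
    (ε : ℝ) (hε : 0 < ε) (hrε : (r : ℝ) ≥ 2 / ε)
    (hpair : ∀ i j : Fin r, i ≠ j →
      (∑ a, ∑ b, xs a * A a b * xs b) - (∑ a, ∑ b, x i a * A a b * x j b) < ε / 2) :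
    (∑ a, ∑ b, xs a * A a b * xs b) -
      (∑ a, ∑ b, ((1 / (r : ℝ)) * ∑ i, x i a) * A a b * ((1 / (r : ℝ)) * ∑ i, x i b))
      < ε := by
  have hR : (0 : ℝ) < r := by positivity
  set S : ℝ := ∑ a, ∑ b, xs a * A a b * xs b with hS
  set B : Fin r → Fin r → ℝ := fun i j => ∑ a, ∑ b, x i a * A a b * x j b with hB
  -- S ≤ 1
  have hS1 : S ≤ 1 := by
    have step1 : S ≤ ∑ a, ∑ b, xs a * xs b := by
      apply Finset.sum_le_sum; intro a _
      apply Finset.sum_le_sum; intro b _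
      have h1 := (hA a b).2
      have h2 := mul_nonneg (hxs_nonneg a) (hxs_nonneg b)
      nlinarith
    have step2 : ∑ a, ∑ b, xs a * xs b = 1 := by
      rw [← Finset.sum_mul_sum, hxs_sum, one_mul]
    linarith
  -- B i j ≥ 0
  have hB0 : ∀ i j, 0 ≤ B i j := by
    intro i j
    apply Finset.sum_nonneg; intro a _
    apply Finset.sum_nonneg; intro b _
    have := (hA a b).1
    have := hx_nonneg i a; have := hx_nonneg j b
    positivity
  -- rewrite the averaged quadratic form
  have hkey : (∑ a, ∑ b, ((1 / (r : ℝ)) * ∑ i, x i a) * A a b * ((1 / (r : ℝ)) * ∑ i, x i b))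
      = (1 / (r : ℝ))^2 * ∑ i, ∑ j, B i j := by
    have e1 : ∀ a b : Fin p, ((1 / (r : ℝ)) * ∑ i, x i a) * A a b * ((1 / (r : ℝ)) * ∑ i, x i b)
        = ∑ i, ∑ j, (1 / (r : ℝ))^2 * (x i a * A a b * x j b) := by
      intro a b
      have hmul : ((∑ i, x i a) * (∑ j, x j b)) = ∑ i, ∑ j, x i a * x j b :=
        Finset.sum_mul_sum _ _ _ _
      calc ((1 / (r : ℝ)) * ∑ i, x i a) * A a b * ((1 / (r : ℝ)) * ∑ i, x i b)
          = (1 / (r : ℝ))^2 * (((∑ i, x i a) * (∑ j, x j b)) * A a b) := by ring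
        _ = (1 / (r : ℝ))^2 * ((∑ i, ∑ j, x i a * x j b) * A a b) := by rw [hmul]
        _ = ∑ i, ∑ j, (1 / (r : ℝ))^2 * (x i a * A a b * x j b) := by
            rw [Finset.sum_mul, Finset.mul_sum]
            apply Finset.sum_congr rfl; intro i _
            rw [Finset.sum_mul, Finset.mul_sum]
            apply Finset.sum_congr rfl; intro j _
            ring
    calc (∑ a, ∑ b, ((1 / (r : ℝ)) * ∑ i, x i a) * A a b * ((1 / (r : ℝ)) * ∑ i, x i b))
        = ∑ a, ∑ b, ∑ i, ∑ j, (1 / (r : ℝ))^2 * (x i a * A a b * x j b) := by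
          exact Finset.sum_congr rfl (fun a _ => Finset.sum_congr rfl (fun b _ => e1 a b))
      _ = ∑ a, ∑ i, ∑ b, ∑ j, (1 / (r : ℝ))^2 * (x i a * A a b * x j b) :=
          Finset.sum_congr rfl (fun a _ => Finset.sum_comm)
      _ = ∑ i, ∑ a, ∑ b, ∑ j, (1 / (r : ℝ))^2 * (x i a * A a b * x j b) :=
          Finset.sum_comm
      _ = ∑ i, ∑ a, ∑ j, ∑ b, (1 / (r : ℝ))^2 * (x i a * A a b * x j b) :=
          Finset.sum_congr rfl (fun i _ => Finset.sum_congr rfl (fun a _ => Finset.sum_comm))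
      _ = ∑ i, ∑ j, ∑ a, ∑ b, (1 / (r : ℝ))^2 * (x i a * A a b * x j b) :=
          Finset.sum_congr rfl (fun i _ => Finset.sum_comm)
      _ = (1 / (r : ℝ))^2 * ∑ i, ∑ j, B i j := by
          rw [Finset.mul_sum]
          apply Finset.sum_congr rfl; intro i _
          rw [Finset.mul_sum]
          apply Finset.sum_congr rfl; intro j _
          rw [hB, Finset.mul_sum]
          apply Finset.sum_congr rfl; intro a _
          rw [Finset.mul_sum]
  rw [hkey]
  -- bound the double sum of (S - B i j)
  have hsum : ∑ i : Fin r, ∑ j : Fin r, (S - B i j)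
      ≤ (r : ℝ) + (r : ℝ) * ((r : ℝ) - 1) * (ε / 2) := by
    have hrow : ∀ i : Fin r, ∑ j : Fin r, (S - B i j)
        ≤ 1 + ((r : ℝ) - 1) * (ε / 2) := by
      intro i
      have h1 : ∑ j : Fin r, (S - B i j)
          ≤ ∑ j : Fin r, (if i = j then (1 : ℝ) else ε / 2) := by
        apply Finset.sum_le_sum; intro j _
        by_cases h : i = j
        · rw [if_pos h]
          have := hB0 i j; linarith
        · rw [if_neg h]
          exact le_of_lt (hpair i j h)
      have h2 : ∑ j : Fin r, (if i = j then (1 : ℝ) else ε / 2)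
          = 1 + ((r : ℝ) - 1) * (ε / 2) := by
        have e : ∀ j : Fin r, (if i = j then (1 : ℝ) else ε / 2)
            = ε / 2 + (if i = j then (1 - ε / 2 : ℝ) else 0) := by
          intro j; split <;> ring
        rw [Finset.sum_congr rfl (fun j _ => e j), Finset.sum_add_distrib,
          Finset.sum_ite_eq, Finset.sum_const, Finset.card_univ]
        simp [Fintype.card_fin]
        ring
      linarith
    calc ∑ i : Fin r, ∑ j : Fin r, (S - B i j)
        ≤ ∑ i : Fin r, (1 + ((r : ℝ) - 1) * (ε / 2)) :=
          Finset.sum_le_sum (fun i _ => hrow i)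
      _ = (r : ℝ) * (1 + ((r : ℝ) - 1) * (ε / 2)) := by
          rw [Finset.sum_const, Finset.card_univ, Fintype.card_fin, nsmul_eq_mul]
      _ = (r : ℝ) + (r : ℝ) * ((r : ℝ) - 1) * (ε / 2) := by ring
  have hexp : ∑ i : Fin r, ∑ j : Fin r, (S - B i j)
      = (r : ℝ)^2 * S - ∑ i, ∑ j, B i j := by
    simp [Finset.sum_sub_distrib, Finset.sum_const, Finset.card_univ]
    ring
  rw [hexp] at hsum
  -- final arithmetic
  have hre : 2 ≤ (r : ℝ) * ε := by
    rw [ge_iff_le, div_le_iff₀ hε] at hrε; linarith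
  have h3 : S - (1 / (r : ℝ))^2 * ∑ i, ∑ j, B i j
      ≤ (1 / (r : ℝ))^2 * ((r : ℝ) + (r : ℝ) * ((r : ℝ) - 1) * (ε / 2)) := by
    have hr2 : (0:ℝ) < (r:ℝ)^2 := by positivity
    rw [← sub_nonneg]
    have hnn : (1 / (r : ℝ))^2 * (((r : ℝ) + (r : ℝ) * ((r : ℝ) - 1) * (ε / 2))
        - ((r : ℝ)^2 * S - ∑ i, ∑ j, B i j)) ≥ 0 := by
      apply mul_nonneg (by positivity); linarith
    calc (1 / (r:ℝ))^2 * ((r : ℝ) + (r : ℝ) * ((r : ℝ) - 1) * (ε / 2))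
          - (S - (1 / (r:ℝ))^2 * ∑ i, ∑ j, B i j)
        = (1 / (r : ℝ))^2 * (((r : ℝ) + (r : ℝ) * ((r : ℝ) - 1) * (ε / 2))
            - ((r : ℝ)^2 * S - ∑ i, ∑ j, B i j)) := by
          field_simp
      _ ≥ 0 := hnn
  have hfin : (1 / (r : ℝ))^2 * ((r : ℝ) + (r : ℝ) * ((r : ℝ) - 1) * (ε / 2)) < ε := by
    rw [div_pow, one_pow, div_mul_eq_mul_div, div_lt_iff₀ (by positivity)]
    nlinarith [hre, hε, hR]
  linarith
end

section
/- Let A : Fin p → Fin p → ℝ with entries in [0,1] and let x* ∈ Δ_p be a probability vector maximizing x ↦ xᵀAx over the simplex. For every ε ∈ (0,1) there exist k-uniform probability vectors x⁽¹⁾, …, x⁽ʳ⁾ with r = ⌈2/ε⌉ and k = ⌈16 ln(3/ε)/ε²⌉ such that for all i ≠ j, x*ᵀ A x* − x⁽ⁱ⁾ᵀ A x⁽ʲ⁾ < ε/2. -/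
open Finset

lemma stmt6_marg_aux {k p : ℕ} (xs : Fin p → ℝ) (hsum : ∑ v, xs v = 1)
    (s t : Fin k) (hst : s ≠ t) (a b : Fin p) :
    ∑ f : Fin k → Fin p, (∏ u, xs (f u)) *
      ((if f s = a then (1:ℝ) else 0) * (if f t = b then 1 else 0))
    = xs a * xs b := by
  have key : ∀ f : Fin k → Fin p,
      (∏ u, xs (f u)) * ((if f s = a then (1:ℝ) else 0) * (if f t = b then 1 else 0))
      = ∏ u, (xs (f u) * (if u = s then (if f u = a then (1:ℝ) else 0) else 1)
          * (if u = t then (if f u = b then (1:ℝ) else 0) else 1)) := by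
    intro f
    rw [prod_mul_distrib, prod_mul_distrib, Finset.prod_ite_eq' univ s
      (fun u => if f u = a then (1:ℝ) else 0), Finset.prod_ite_eq' univ t
      (fun u => if f u = b then (1:ℝ) else 0)]
    simp [mul_assoc]
  calc ∑ f : Fin k → Fin p, (∏ u, xs (f u)) *
        ((if f s = a then (1:ℝ) else 0) * (if f t = b then 1 else 0))
      = ∑ f : Fin k → Fin p, ∏ u, (xs (f u) * (if u = s then (if f u = a then (1:ℝ) else 0) else 1)
          * (if u = t then (if f u = b then (1:ℝ) else 0) else 1)) := by
        exact Finset.sum_congr rfl fun f _ => key f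
    _ = ∏ u : Fin k, ∑ v : Fin p, (xs v * (if u = s then (if v = a then (1:ℝ) else 0) else 1)
          * (if u = t then (if v = b then (1:ℝ) else 0) else 1)) := by
        exact (Fintype.prod_sum (fun (u : Fin k) (v : Fin p) =>
          (xs v * if u = s then if v = a then (1:ℝ) else 0 else 1)
            * if u = t then if v = b then (1:ℝ) else 0 else 1)).symm
    _ = ∏ u : Fin k, ((if u = s then xs a else 1) * (if u = t then xs b else 1)) := by
        refine Finset.prod_congr rfl fun u _ => ?_
        by_cases h1 : u = s <;> by_cases h2 : u = t
        · exact absurd (h1 ▸ h2) hst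
        · simp [h1, h2, hst, Ne.symm hst, mul_ite, Finset.sum_ite_eq' univ a xs]
        · simp [h1, h2, hst, Ne.symm hst, mul_ite, Finset.sum_ite_eq' univ b xs]
        · simp [h1, h2, hsum]
    _ = xs a * xs b := by
        rw [prod_mul_distrib, Finset.prod_ite_eq' univ s (fun _ => xs a),
          Finset.prod_ite_eq' univ t (fun _ => xs b)]
        simp

lemma stmt6_marg {k p : ℕ} (xs : Fin p → ℝ) (hsum : ∑ v, xs v = 1)
    (A : Fin p → Fin p → ℝ) (s t : Fin k) (hst : s ≠ t) :
    ∑ f : Fin k → Fin p, (∏ u, xs (f u)) * A (f s) (f t)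
      = ∑ a, ∑ b, xs a * A a b * xs b := by
  have expand : ∀ f : Fin k → Fin p, (∏ u, xs (f u)) * A (f s) (f t)
      = ∑ a, ∑ b, ((∏ u, xs (f u)) *
          ((if f s = a then (1:ℝ) else 0) * (if f t = b then 1 else 0))) * A a b := by
    intro f
    simp [mul_ite, mul_zero, mul_one, ite_mul, zero_mul, one_mul, Finset.sum_ite_eq]
  rw [Finset.sum_congr rfl fun f _ => expand f, Finset.sum_comm]
  refine Finset.sum_congr rfl fun a _ => ?_
  rw [Finset.sum_comm]
  refine Finset.sum_congr rfl fun b _ => ?_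
  rw [← Finset.sum_mul, stmt6_marg_aux xs hsum s t hst a b]
  ring

lemma stmt6_swap4 {M : Type*} [AddCommMonoid M] {ι₁ ι₂ ι₃ ι₄ : Type*}
    [Fintype ι₁] [Fintype ι₂] [Fintype ι₃] [Fintype ι₄]
    (g : ι₁ → ι₂ → ι₃ → ι₄ → M) :
    ∑ a, ∑ b, ∑ s, ∑ t, g a b s t = ∑ s, ∑ t, ∑ a, ∑ b, g a b s t := by
  calc ∑ a, ∑ b, ∑ s, ∑ t, g a b s t
      = ∑ a, ∑ s, ∑ b, ∑ t, g a b s t := by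
        exact Finset.sum_congr rfl fun a _ => Finset.sum_comm
    _ = ∑ s, ∑ a, ∑ b, ∑ t, g a b s t := Finset.sum_comm
    _ = ∑ s, ∑ a, ∑ t, ∑ b, g a b s t := by
        exact Finset.sum_congr rfl fun s _ => Finset.sum_congr rfl fun a _ => Finset.sum_comm
    _ = ∑ s, ∑ t, ∑ a, ∑ b, g a b s t := by
        exact Finset.sum_congr rfl fun s _ => Finset.sum_comm

lemma stmt6_collapse {k p : ℕ} (A : Fin p → Fin p → ℝ) (f : Fin k → Fin p) :
    ∑ a, ∑ b, (∑ s, if f s = a then (1:ℝ) else 0) * A a b *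
        (∑ t, if f t = b then (1:ℝ) else 0) = ∑ s, ∑ t, A (f s) (f t) := by
  have step : ∀ a b, (∑ s, if f s = a then (1:ℝ) else 0) * A a b *
      (∑ t, if f t = b then (1:ℝ) else 0)
      = ∑ s, ∑ t, ((if f s = a then (1:ℝ) else 0) * A a b * (if f t = b then 1 else 0)) := by
    intro a b
    rw [Finset.sum_mul, Finset.sum_mul_sum]
  rw [Finset.sum_congr rfl fun a _ => Finset.sum_congr rfl fun b _ => step a b,
    stmt6_swap4]
  refine Finset.sum_congr rfl fun s _ => Finset.sum_congr rfl fun t _ => ?_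
  simp [ite_mul, zero_mul, one_mul, mul_ite, mul_zero, mul_one, Finset.sum_ite_eq]

lemma stmt6_swap3 {M : Type*} [AddCommMonoid M] {ι₁ ι₂ ι₃ : Type*}
    [Fintype ι₁] [Fintype ι₂] [Fintype ι₃]
    (g : ι₁ → ι₂ → ι₃ → M) :
    ∑ a, ∑ b, ∑ s, g a b s = ∑ b, ∑ s, ∑ a, g a b s := by
  calc ∑ a, ∑ b, ∑ s, g a b s
      = ∑ b, ∑ a, ∑ s, g a b s := Finset.sum_comm
    _ = ∑ b, ∑ s, ∑ a, g a b s := Finset.sum_congr rfl fun b _ => Finset.sum_comm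

theorem stmt_6 (p : ℕ) (A : Fin p → Fin p → ℝ)
    (hA : ∀ i j, A i j ∈ Set.Icc (0 : ℝ) 1)
    (xs : Fin p → ℝ) (hxs_nonneg : ∀ i, 0 ≤ xs i) (hxs_sum : ∑ i, xs i = 1)
    (hmax : ∀ y : Fin p → ℝ, (∀ i, 0 ≤ y i) → (∑ i, y i = 1) →
      (∑ a, ∑ b, y a * A a b * y b) ≤ (∑ a, ∑ b, xs a * A a b * xs b))
    (ε : ℝ) (hε : ε ∈ Set.Ioo (0 : ℝ) 1) :
    ∃ x : Fin (⌈2 / ε⌉₊) → Fin p → ℝ,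
      (∀ i, (∀ a, 0 ≤ x i a) ∧ (∑ a, x i a = 1) ∧
        (∀ a, ∃ β : ℕ, x i a = (β : ℝ) / (⌈16 * Real.log (3 / ε) / ε ^ 2⌉₊ : ℝ))) ∧
      (∀ i j, i ≠ j →
        (∑ a, ∑ b, xs a * A a b * xs b) - (∑ a, ∑ b, x i a * A a b * x j b) < ε / 2) := by
  obtain ⟨hε0, hε1⟩ := hε
  set k : ℕ := ⌈16 * Real.log (3 / ε) / ε ^ 2⌉₊ with hk_def
  set V : ℝ := ∑ a, ∑ b, xs a * A a b * xs b with hV_def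
  -- numeric facts about k
  have hL : 1 < Real.log (3 / ε) := by
    rw [Real.lt_log_iff_exp_lt (by positivity)]
    calc Real.exp 1 < 2.7182818286 := Real.exp_one_lt_d9
      _ ≤ 3 / ε := by rw [le_div_iff₀ hε0]; nlinarith
  have hceil : 2 / ε < 16 * Real.log (3 / ε) / ε ^ 2 := by
    rw [div_lt_div_iff₀ hε0 (by positivity)]
    nlinarith
  have hk2 : 2 / ε < (k : ℝ) := lt_of_lt_of_le hceil (Nat.le_ceil _)
  have hkR : (0 : ℝ) < (k : ℝ) := lt_trans (by positivity) hk2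
  have hk0 : (k : ℝ) ≠ 0 := ne_of_gt hkR
  have h1k : 1 / (k : ℝ) < ε / 2 := by
    rw [div_lt_div_iff₀ hkR two_pos]
    rw [div_lt_iff₀ hε0] at hk2
    nlinarith
  -- V ≤ 1
  have hV1 : V ≤ 1 := by
    have hstep : V ≤ ∑ a, ∑ b, xs a * xs b := by
      refine Finset.sum_le_sum fun a _ => Finset.sum_le_sum fun b _ => ?_
      nlinarith [mul_nonneg (hxs_nonneg a) (hxs_nonneg b), (hA a b).1, (hA a b).2]
    calc V ≤ ∑ a, ∑ b, xs a * xs b := hstep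
      _ = (∑ a, xs a) * (∑ b, xs b) := (Finset.sum_mul_sum _ _ _ _).symm
      _ = 1 := by rw [hxs_sum]; ring
  -- the weights
  set w : (Fin k → Fin p) → ℝ := fun f => ∏ u, xs (f u) with hw_def
  have hw_nonneg : ∀ f, 0 ≤ w f := fun f => Finset.prod_nonneg fun u _ => hxs_nonneg (f u)
  have hw_sum : ∑ f, w f = 1 := by
    have h := Fintype.prod_sum (fun (_ : Fin k) (v : Fin p) => xs v)
    simp only [hw_def, ← h, hxs_sum, Finset.prod_const_one]
  -- empirical distributions
  set y : (Fin k → Fin p) → Fin p → ℝ :=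
    fun f a => (∑ s, if f s = a then (1:ℝ) else 0) / (k : ℝ) with hy_def
  set G : (Fin k → Fin p) → ℝ := fun f => ∑ a, ∑ b, y f a * A a b * y f b with hG_def
  have hG : ∀ f, G f = (∑ s, ∑ t, A (f s) (f t)) / ((k:ℝ) * k) := by
    intro f
    have h1 : ∀ a b, y f a * A a b * y f b
        = ((∑ s, if f s = a then (1:ℝ) else 0) * A a b *
            (∑ t, if f t = b then (1:ℝ) else 0)) / ((k:ℝ)*k) := by
      intro a b
      simp only [hy_def]
      ring
    simp only [hG_def]
    rw [Finset.sum_congr rfl fun a _ => Finset.sum_congr rfl fun b _ => h1 a b]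
    simp only [← Finset.sum_div]
    rw [stmt6_collapse]
  -- expectation lower bound
  have hE : V - 1 / (k:ℝ) ≤ ∑ f, w f * G f := by
    have hEeq : ∑ f, w f * G f
        = (∑ s, ∑ t, ∑ f : Fin k → Fin p, w f * A (f s) (f t)) / ((k:ℝ) * k) := by
      calc ∑ f, w f * G f
          = ∑ f : Fin k → Fin p, (∑ s, ∑ t, w f * A (f s) (f t)) / ((k:ℝ)*k) := by
            refine Finset.sum_congr rfl fun f _ => ?_
            rw [hG f, ← mul_div_assoc]
            congr 1
            rw [Finset.mul_sum]
            exact Finset.sum_congr rfl fun s _ => Finset.mul_sum _ _ _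
        _ = (∑ f : Fin k → Fin p, ∑ s, ∑ t, w f * A (f s) (f t)) / ((k:ℝ)*k) := by
            rw [Finset.sum_div]
        _ = (∑ s, ∑ t, ∑ f : Fin k → Fin p, w f * A (f s) (f t)) / ((k:ℝ)*k) := by
            rw [stmt6_swap3]
    rw [hEeq]
    have hterm : ∀ s t : Fin k, (if s = t then (0:ℝ) else V)
        ≤ ∑ f : Fin k → Fin p, w f * A (f s) (f t) := by
      intro s t
      by_cases hst : s = t
      · simp only [hst, if_pos rfl]
        exact Finset.sum_nonneg fun f _ => mul_nonneg (hw_nonneg f) (hA _ _).1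
      · rw [if_neg hst]
        exact le_of_eq (stmt6_marg xs hxs_sum A s t hst).symm
    have hlow : (k:ℝ)*(k:ℝ)*V - (k:ℝ)*V
        ≤ ∑ s, ∑ t, ∑ f : Fin k → Fin p, w f * A (f s) (f t) := by
      have hrow : ∀ s : Fin k, ∑ t : Fin k, (if s = t then (0:ℝ) else V)
          = (k:ℝ)*V - V := by
        intro s
        have hpt : ∀ t : Fin k, (if s = t then (0:ℝ) else V)
            = V - (if s = t then V else 0) := by
          intro t; split_ifs <;> ring
        simp only [hpt]
        rw [Finset.sum_sub_distrib]
        simp [Finset.sum_ite_eq, Finset.card_univ, mul_comm]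
      have := Finset.sum_le_sum fun s (_ : s ∈ (univ : Finset (Fin k))) =>
        Finset.sum_le_sum fun t (_ : t ∈ (univ : Finset (Fin k))) => hterm s t
      calc (k:ℝ)*(k:ℝ)*V - (k:ℝ)*V
          = ∑ s : Fin k, ((k:ℝ)*V - V) := by
            rw [Finset.sum_const, Finset.card_univ, Fintype.card_fin, nsmul_eq_mul]
            ring
        _ = ∑ s : Fin k, ∑ t : Fin k, (if s = t then (0:ℝ) else V) := by
            exact (Finset.sum_congr rfl fun s _ => hrow s).symm
        _ ≤ _ := this
    rw [le_div_iff₀ (by positivity)]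
    have hsimp : (V - 1/(k:ℝ)) * ((k:ℝ)*k) = V*((k:ℝ)*k) - k := by
      field_simp
    have hkV : (k:ℝ)*V ≤ (k:ℝ) := by nlinarith [hV1, hkR]
    rw [hsimp]
    nlinarith [hlow, hkV]
  -- averaging: some sample achieves the bound
  have hex : ∃ f : Fin k → Fin p, V - 1/(k:ℝ) ≤ G f := by
    by_contra hcon
    push_neg at hcon
    obtain ⟨f₀, -, hf₀⟩ := Finset.exists_ne_zero_of_sum_ne_zero
      (by rw [hw_sum]; exact one_ne_zero)
    have hf₀pos : 0 < w f₀ := lt_of_le_of_ne (hw_nonneg f₀) (Ne.symm hf₀)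
    have hlt : ∑ f, w f * G f < ∑ f, w f * (V - 1/(k:ℝ)) := by
      refine Finset.sum_lt_sum
        (fun f _ => mul_le_mul_of_nonneg_left (hcon f).le (hw_nonneg f))
        ⟨f₀, Finset.mem_univ _, ?_⟩
      exact mul_lt_mul_of_pos_left (hcon f₀) hf₀pos
    rw [← Finset.sum_mul, hw_sum, one_mul] at hlt
    linarith
  obtain ⟨f₀, hf₀⟩ := hex
  refine ⟨fun _ => y f₀, fun i => ⟨?_, ?_, ?_⟩, fun i j hij => ?_⟩
  · intro a
    simp only [hy_def]
    refine div_nonneg (Finset.sum_nonneg fun s _ => ?_) hkR.le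
    split_ifs <;> norm_num
  · simp only [hy_def]
    rw [← Finset.sum_div, Finset.sum_comm]
    simp only [Finset.sum_ite_eq, Finset.mem_univ, if_true]
    rw [Finset.sum_const, Finset.card_univ, Fintype.card_fin, nsmul_eq_mul, mul_one]
    exact div_self hk0
  · intro a
    refine ⟨(univ.filter fun s => f₀ s = a).card, ?_⟩
    simp only [hy_def]
    congr 1
    rw [Finset.sum_boole]
  · show V - G f₀ < ε / 2
    linarith
end

section
/- Let A : Fin p → Fin p → ℝ with entries in [0,1] and v* = max over the simplex Δ_p of xᵀAx. For every ε ∈ (0,1) there exists a K-uniform probability vector x with K = ⌈32 ln(3/ε)/ε³⌉ such that v* − xᵀAx < ε. -/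
open Finset

private lemma count_sum' {p K : ℕ} (t : Fin K → Fin p) (F : Fin p → ℝ) :
    ∑ j, F (t j) = ∑ a, ((univ.filter (fun m => t m = a)).card : ℝ) * F a := by
  have : ∀ a : Fin p, ((univ.filter (fun m => t m = a)).card : ℝ) * F a
      = ∑ j : Fin K, if t j = a then F a else 0 := by
    intro a
    rw [Finset.sum_ite, Finset.sum_const, Finset.sum_const]
    simp [mul_comm]
  simp_rw [this]
  rw [Finset.sum_comm]
  simp

private lemma marg' {p K : ℕ} (xs : Fin p → ℝ) (hs : ∑ i, xs i = 1) (A : Fin p → Fin p → ℝ)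
    {j l : Fin K} (hjl : j ≠ l) :
    ∑ t : Fin K → Fin p, (∏ m, xs (t m)) * A (t j) (t l)
      = ∑ a, ∑ b, xs a * A a b * xs b := by
  classical
  have key : ∀ a : Fin p,
      ∑ t : Fin K → Fin p, (∏ m, xs (t m)) * (if t j = a then A a (t l) else 0)
        = xs a * ∑ b, xs b * A a b := by
    intro a
    set c : Fin K → Fin p → ℝ := fun m i =>
      if m = j then (if i = a then xs i else 0)
      else if m = l then xs i * A a i else xs i with hc
    have h1 : ∀ t : Fin K → Fin p,
        ∏ m, c m (t m) = (∏ m, xs (t m)) * (if t j = a then A a (t l) else 0) := by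
      intro t
      by_cases h : t j = a
      · have : ∀ m, c m (t m) = xs (t m) * (if m = l then A a (t l) else 1) := by
          intro m
          by_cases hm : m = j
          · subst hm; simp [hc, h, hjl]
          · by_cases hl : m = l
            · subst hl; simp [hc, hm]
            · simp [hc, hm, hl]
        simp_rw [this]
        rw [Finset.prod_mul_distrib, Finset.prod_ite_eq' Finset.univ l (fun _ => A a (t l))]
        simp [h]
      · rw [Finset.prod_eq_zero (Finset.mem_univ j)]
        · simp [h]
        · simp [hc, h]
    have h2 : ∏ m, (∑ i, c m i) = xs a * ∑ b, xs b * A a b := by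
      have : ∀ m : Fin K, (∑ i, c m i)
          = (if m = j then xs a else 1) * (if m = l then ∑ b, xs b * A a b else 1) := by
        intro m
        by_cases hm : m = j
        · subst hm; simp [hc, hjl, Finset.sum_ite_eq' Finset.univ a xs]
        · by_cases hl : m = l
          · subst hl; simp [hc, hm]
          · simp [hc, hm, hl, hs]
      simp_rw [this]
      rw [Finset.prod_mul_distrib, Finset.prod_ite_eq' Finset.univ j (fun _ => xs a),
        Finset.prod_ite_eq' Finset.univ l (fun _ => ∑ b, xs b * A a b)]
      simp
    calc ∑ t : Fin K → Fin p, (∏ m, xs (t m)) * (if t j = a then A a (t l) else 0)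
        = ∑ t : Fin K → Fin p, ∏ m, c m (t m) := by simp_rw [h1]
      _ = ∏ m, (∑ i, c m i) := (Fintype.prod_sum c).symm
      _ = xs a * ∑ b, xs b * A a b := h2
  have expand : ∀ t : Fin K → Fin p,
      (∏ m, xs (t m)) * A (t j) (t l)
        = ∑ a, (∏ m, xs (t m)) * (if t j = a then A a (t l) else 0) := by
    intro t
    rw [← Finset.mul_sum]
    congr 1
    simp
  simp_rw [expand]
  rw [Finset.sum_comm]
  simp_rw [key]
  congr 1
  ext a
  rw [Finset.mul_sum]
  congr 1; ext b; ring

theorem stmt_7 (p : ℕ) (A : Fin p → Fin p → ℝ)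
    (hA : ∀ i j, A i j ∈ Set.Icc (0 : ℝ) 1)
    (xs : Fin p → ℝ) (hxs_nonneg : ∀ i, 0 ≤ xs i) (hxs_sum : ∑ i, xs i = 1)
    (hmax : ∀ y : Fin p → ℝ, (∀ i, 0 ≤ y i) → (∑ i, y i = 1) →
      (∑ a, ∑ b, y a * A a b * y b) ≤ (∑ a, ∑ b, xs a * A a b * xs b))
    (ε : ℝ) (hε : ε ∈ Set.Ioo (0 : ℝ) 1) :
    ∃ x : Fin p → ℝ,
      (∀ a, 0 ≤ x a) ∧ (∑ a, x a = 1) ∧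
      (∀ a, ∃ β : ℕ, x a = (β : ℝ) / (⌈32 * Real.log (3 / ε) / ε ^ 3⌉₊ : ℝ)) ∧
      (∑ a, ∑ b, xs a * A a b * xs b) - (∑ a, ∑ b, x a * A a b * x b) < ε := by
  classical
  obtain ⟨hε0, hε1⟩ := hε
  set K : ℕ := ⌈32 * Real.log (3 / ε) / ε ^ 3⌉₊ with hKdef
  have hε3 : (0:ℝ) < ε ^ 3 := by positivity
  have hlog : (1:ℝ) ≤ Real.log (3 / ε) := by
    rw [Real.le_log_iff_exp_le (by positivity)]
    have h1 : Real.exp 1 < 2.7182818286 := Real.exp_one_lt_d9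
    have h2 : (3:ℝ) ≤ 3 / ε := by
      rw [le_div_iff₀ hε0]
      nlinarith
    nlinarith
  have hKge : (32:ℝ) / ε ^ 3 ≤ (K : ℝ) := by
    have h1 : (32:ℝ) / ε ^ 3 ≤ 32 * Real.log (3 / ε) / ε ^ 3 := by
      gcongr
      nlinarith
    exact h1.trans (Nat.le_ceil _)
  have hKpos : (0:ℝ) < (K : ℝ) := lt_of_lt_of_le (by positivity) hKge
  have hK0 : 0 < K := by exact_mod_cast hKpos
  have hp : 0 < p := by
    rcases Nat.eq_zero_or_pos p with h | h
    · subst h; simp at hxs_sum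
    · exact h
  set v : ℝ := ∑ a, ∑ b, xs a * A a b * xs b with hvdef
  have hv0 : 0 ≤ v := by
    apply Finset.sum_nonneg; intro a _
    apply Finset.sum_nonneg; intro b _
    have := (hA a b).1
    have := hxs_nonneg a; have := hxs_nonneg b
    positivity
  have hv1 : v ≤ 1 := by
    have h : v ≤ ∑ a, ∑ b, xs a * 1 * xs b := by
      apply Finset.sum_le_sum; intro a _
      apply Finset.sum_le_sum; intro b _
      have h1 := (hA a b).2
      have h2 := hxs_nonneg a; have h3 := hxs_nonneg b
      nlinarith [mul_nonneg (mul_nonneg h2 h3) (sub_nonneg.2 h1)]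
    have h2 : ∑ a, ∑ b, xs a * 1 * xs b = 1 := by
      simp_rw [mul_one, ← Finset.mul_sum, ← Finset.sum_mul, hxs_sum]
      norm_num
    linarith [h.trans_eq h2]
  -- weights and payoff over tuples
  set w : (Fin K → Fin p) → ℝ := fun t => ∏ m, xs (t m) with hwdef
  set f : (Fin K → Fin p) → ℝ := fun t => ∑ j, ∑ l, A (t j) (t l) with hfdef
  have hw0 : ∀ t, 0 ≤ w t := fun t => Finset.prod_nonneg (fun m _ => hxs_nonneg (t m))
  have hwsum : ∑ t : Fin K → Fin p, w t = 1 := by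
    have := (Fintype.sum_pow xs K).symm
    rw [hxs_sum] at this
    simpa [hwdef] using this
  have hS : ((K:ℝ)^2 - K) * v ≤ ∑ t : Fin K → Fin p, w t * f t := by
    have hswap : ∑ t : Fin K → Fin p, w t * f t
        = ∑ j : Fin K, ∑ l : Fin K, ∑ t : Fin K → Fin p, w t * A (t j) (t l) := by
      simp_rw [hfdef, Finset.mul_sum]
      rw [Finset.sum_comm]
      congr 1; ext j
      rw [Finset.sum_comm]
    rw [hswap]
    have hterm : ∀ j l : Fin K, (if j = l then (0:ℝ) else v)
        ≤ ∑ t : Fin K → Fin p, w t * A (t j) (t l) := by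
      intro j l
      by_cases h : j = l
      · simp only [h, if_pos rfl] at *
        apply Finset.sum_nonneg; intro t _
        exact mul_nonneg (hw0 t) (hA (t l) (t l)).1
      · rw [if_neg h]
        exact le_of_eq (marg' xs hxs_sum A h).symm
    calc ((K:ℝ)^2 - K) * v = ∑ j : Fin K, ∑ l : Fin K, (if j = l then (0:ℝ) else v) := by
          have : ∀ j : Fin K, ∑ l : Fin K, (if j = l then (0:ℝ) else v)
              = (K : ℝ) * v - v := by
            intro j
            have : ∑ l : Fin K, (if j = l then (0:ℝ) else v)
                = (∑ _l : Fin K, v) - (if j ∈ (univ : Finset (Fin K)) then v else 0) := by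
              rw [← Finset.sum_ite_eq (univ : Finset (Fin K)) j (fun _ => v)]
              rw [← Finset.sum_sub_distrib]
              congr 1; ext l
              by_cases h : j = l <;> simp [h]
            simp only [this, Finset.sum_const, Finset.card_univ, Fintype.card_fin,
              Finset.mem_univ, if_pos]
            push_cast; ring
          simp_rw [this]
          rw [Finset.sum_const, Finset.card_univ, Fintype.card_fin]
          push_cast; ring
      _ ≤ _ := Finset.sum_le_sum (fun j _ => Finset.sum_le_sum (fun l _ => hterm j l))
  -- find a good tuple
  have hne : ∃ t0 : Fin K → Fin p, w t0 ≠ 0 := by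
    by_contra h
    push_neg at h
    rw [Finset.sum_eq_zero (fun t _ => h t)] at hwsum
    norm_num at hwsum
  obtain ⟨t0, ht0⟩ := hne
  have hgood : ∃ t : Fin K → Fin p, ((K:ℝ)^2 - K) * v ≤ f t := by
    by_contra h
    push_neg at h
    have hlt : ∑ t : Fin K → Fin p, w t * f t
        < ∑ t : Fin K → Fin p, w t * (((K:ℝ)^2 - K) * v) := by
      apply Finset.sum_lt_sum
      · intro t _
        exact mul_le_mul_of_nonneg_left (le_of_lt (h t)) (hw0 t)
      · exact ⟨t0, Finset.mem_univ t0,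
          (mul_lt_mul_iff_right₀ (lt_of_le_of_ne (hw0 t0) (Ne.symm ht0))).2 (h t0)⟩
    rw [← Finset.sum_mul, hwsum, one_mul] at hlt
    linarith
  obtain ⟨t, ht⟩ := hgood
  -- build the K-uniform vector
  set n : Fin p → ℕ := fun a => (univ.filter (fun m => t m = a)).card with hndef
  refine ⟨fun a => (n a : ℝ) / (K : ℝ), ?_, ?_, ?_, ?_⟩
  · intro a; positivity
  · have hcard : ∑ a, (n a : ℝ) = (K : ℝ) := by
      have := Finset.card_eq_sum_card_fiberwise
        (f := t) (s := (univ : Finset (Fin K))) (t := (univ : Finset (Fin p)))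
        (fun x _ => Finset.mem_univ (t x))
      rw [Finset.card_univ, Fintype.card_fin] at this
      exact_mod_cast this.symm
    rw [← Finset.sum_div, hcard, div_self (ne_of_gt hKpos)]
  · intro a; exact ⟨n a, rfl⟩
  · have hquad : ∑ a, ∑ b, ((n a : ℝ)/K) * A a b * ((n b : ℝ)/K) = f t / (K:ℝ)^2 := by
      have hft : f t = ∑ a, ∑ b, (n a : ℝ) * ((n b : ℝ) * A a b) := by
        show (∑ j, ∑ l, A (t j) (t l)) = _
        rw [count_sum' t (fun a => ∑ l, A a (t l))]
        refine Finset.sum_congr rfl fun a _ => ?_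
        rw [count_sum' t (fun b => A a b), Finset.mul_sum]
      rw [hft, Finset.sum_div]
      refine Finset.sum_congr rfl fun a _ => ?_
      rw [Finset.sum_div]
      refine Finset.sum_congr rfl fun b _ => ?_
      field_simp
    rw [hquad]
    have h1 : v - f t / (K:ℝ)^2 ≤ v / K := by
      have h2 : ((K:ℝ)^2 - K) * v / (K:ℝ)^2 ≤ f t / (K:ℝ)^2 := by gcongr
      have h3 : ((K:ℝ)^2 - K) * v / (K:ℝ)^2 = v - v / K := by
        field_simp
      rw [h3] at h2
      linarith
    have h4 : v / (K:ℝ) ≤ 1 / K := by gcongr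
    have h5 : (1:ℝ) / K ≤ ε ^ 3 / 32 := by
      rw [div_le_div_iff₀ hKpos (by norm_num : (0:ℝ) < 32)]
      rw [div_le_iff₀ hε3] at hKge
      linarith
    have h6 : ε ^ 3 / 32 < ε := by
      have hpe : (0:ℝ) < ε * (1 - ε) * (1 + ε) :=
        mul_pos (mul_pos hε0 (by linarith)) (by linarith)
      nlinarith [hpe]
    calc v - f t / (K:ℝ)^2 ≤ v / K := h1
      _ ≤ 1 / K := h4
      _ ≤ ε ^ 3 / 32 := h5
      _ < ε := h6
end
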